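/- Let k ≥ 1 be an integer. The equation d_2(λ) = x_1(λ)^k has exactly one root ρ″_k in the interval (√(2+√5), ∞), and ρ(T″_{(i,k,j)}) → ρ″_k as min(i,j) → ∞; that is, for every ε > 0 there exists M such that for all integers i, j ≥ M, |ρ(T″_{(i,k,j)}) − ρ″_k| < ε. -/

import Mathlib

open Finset
open scoped Classical

/-- Adjacency matrix of a simple graph over `ℝ`. -/
noncomputable def adjM {V : Type*} [Fintype V] (G : SimpleGraph V) : Matrix V V ℝ :=
  fun a b => if G.Adj a b then 1 else 0

/-- Spectral radius: the largest eigenvalue of the adjacency matrix. -/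
noncomputable def specRad {V : Type*} [Fintype V] (G : SimpleGraph V) : ℝ :=
  sSup {t : ℝ | ∃ f : V → ℝ, f ≠ 0 ∧ (adjM G).mulVec f = t • f}

/-- Characteristic polynomial of the adjacency matrix, as a function `φ_G(λ) = det(λI − A)`. -/
noncomputable def phi {V : Type*} [Fintype V] [DecidableEq V] (G : SimpleGraph V) (l : ℝ) : ℝ :=
  (l • (1 : Matrix V V ℝ) - adjM G).det

/-- `G` is connected with diameter exactly `D`. -/
def hasDiam {V : Type*} (G : SimpleGraph V) (D : ℕ) : Prop :=
  G.Connected ∧ (∀ u v : V, G.dist u v ≤ D) ∧ ∃ u v : V, G.dist u v = D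

/-- `G` is a minimizer graph among connected graphs on `n` vertices with diameter `D`. -/
def IsMinimizer (n D : ℕ) (G : SimpleGraph (Fin n)) : Prop :=
  hasDiam G D ∧ ∀ H : SimpleGraph (Fin n), hasDiam H D → specRad G ≤ specRad H

noncomputable def x1 (l : ℝ) : ℝ := (l - Real.sqrt (l ^ 2 - 4)) / 2
noncomputable def x2 (l : ℝ) : ℝ := (l + Real.sqrt (l ^ 2 - 4)) / 2
noncomputable def d1f (l : ℝ) : ℝ := l - x1 l ^ 3
noncomputable def d2f (l : ℝ) : ℝ := x2 l ^ 3 - l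

/-- Deletion of a vertex from a graph. -/
def delVert {V : Type*} (G : SimpleGraph V) (v : V) : SimpleGraph {u : V // u ≠ v} :=
  SimpleGraph.comap Subtype.val G

noncomputable def pfun {V : Type*} [Fintype V] [DecidableEq V] (G : SimpleGraph V) (v : V)
    (l : ℝ) : ℝ :=
  (phi (delVert G v) l - x1 l * phi G l) / (x2 l - x1 l)

noncomputable def qfun {V : Type*} [Fintype V] [DecidableEq V] (G : SimpleGraph V) (v : V)
    (l : ℝ) : ℝ :=
  (x2 l * phi G l - phi (delVert G v) l) / (x2 l - x1 l)

/-- The tree `T″_{(i,k,j)}`: a path `u_0 ∼ ⋯ ∼ u_{i+k+j+5}` with one pendant vertex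
attached at each of `u_1`, `u_{i+2}`, `u_{i+k+3}`, `u_{i+k+j+4}`. -/
def treeT2 (i k j : ℕ) : SimpleGraph (Fin (i + k + j + 6) ⊕ Fin 4) :=
  SimpleGraph.fromRel (fun a b =>
    match a, b with
    | Sum.inl a, Sum.inl b => (a : ℕ) + 1 = (b : ℕ)
    | Sum.inl a, Sum.inr t =>
        ((t : ℕ) = 0 ∧ (a : ℕ) = 1) ∨ ((t : ℕ) = 1 ∧ (a : ℕ) = i + 2) ∨
        ((t : ℕ) = 2 ∧ (a : ℕ) = i + k + 3) ∨ ((t : ℕ) = 3 ∧ (a : ℕ) = i + k + j + 4)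
    | _, _ => False)


/-!
Write `λ = x + y` with `x y = 1` and `0 < x < 1`. Along a path, any `g_m = a y^m + b x^m`
satisfies `g_{m-1} + g_{m+1} = λ g_m`. Glue such pieces into a positive vector on `T″_{(i,k,j)}`:
`x^r + x^{k+1-r}` on the middle segment, `t (y^m + x^m)` on each arm (`m` = distance from the end
vertex `u_1` or `u_{i+k+j+4}` of the arm, value `t` on its two leaves), `t` chosen so that the
pieces agree at the branch vertices, and every pendant vertex equal to `1/λ` times its neighbour.
Then `A g = λ g` except at the two branch vertices, where `(A g)_B - λ g_B = e - D(λ)` with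
`0 ≤ e ≤ 2 x^{min(i,j)}` and `D(λ) = (d_2(λ) - x_1(λ)^k) / (λ x_2(λ))`.

Since `d_2(√(2+√5)) = 0` and `d_2 - x_1^k` is strictly increasing on `(2, ∞)`, it has a unique
zero `ρ″_k > √(2+√5)`. At `λ = ρ″_k` the vector is a subsolution, so `ρ″_k ≤ ρ(T″_{(i,k,j)})` by
the Rayleigh quotient; at `λ > ρ″_k` it is a supersolution once `i, j` are large, so
`ρ(T″_{(i,k,j)}) ≤ λ` by the Collatz–Wielandt bound.
-/

open Matrix

namespace Matrix

variable {n : Type*} [Fintype n] [DecidableEq n]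

theorem IsHermitian.dotProduct_mulVec_le {A : Matrix n n ℝ} (hA : A.IsHermitian) {c : ℝ}
    (hc : ∀ i, hA.eigenvalues i ≤ c) (g : n → ℝ) : g ⬝ᵥ (A *ᵥ g) ≤ c * (g ⬝ᵥ g) := by
  have hpsd : (algebraMap ℝ (Matrix n n ℝ) c - A).PosSemidef := by
    refine posSemidef_iff_isHermitian_and_spectrum_nonneg.2 ⟨?_, ?_⟩
    · rw [algebraMap_eq_diagonal]; exact (isHermitian_diagonal _).sub hA
    · rw [← spectrum.singleton_sub_eq, hA.spectrum_real_eq_range_eigenvalues]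
      rintro _ ⟨_, rfl, _, ⟨i, rfl⟩, rfl⟩
      exact sub_nonneg.2 (hc i)
  have := hpsd.dotProduct_mulVec_nonneg g
  simp only [star_trivial, Algebra.algebraMap_eq_smul_one, sub_mulVec, smul_mulVec, one_mulVec,
    dotProduct_sub, dotProduct_smul, smul_eq_mul] at this
  linarith

theorem IsHermitian.exists_eigenvector_dotProduct_mulVec_le [Nonempty n] {A : Matrix n n ℝ}
    (hA : A.IsHermitian) :
    ∃ μ, (∃ f ≠ 0, A *ᵥ f = μ • f) ∧ ∀ g, g ⬝ᵥ (A *ᵥ g) ≤ μ * (g ⬝ᵥ g) := by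
  obtain ⟨i, -, hi⟩ := Finset.exists_max_image Finset.univ hA.eigenvalues Finset.univ_nonempty
  refine ⟨hA.eigenvalues i, ⟨_, fun h => ?_, hA.mulVec_eigenvectorBasis i⟩,
    hA.dotProduct_mulVec_le fun j => hi j (Finset.mem_univ j)⟩
  exact hA.eigenvectorBasis.orthonormal.ne_zero i (by ext v; exact congrFun h v)

end Matrix

section Spectral

variable {V : Type*} [Fintype V] (G : SimpleGraph V)

theorem adjM_transpose : (adjM G)ᵀ = adjM G := by
  ext a b
  simp [adjM, G.adj_comm]

theorem adjM_nonneg (a b : V) : 0 ≤ adjM G a b := by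
  unfold adjM; split_ifs <;> norm_num

theorem specRad_spec [Nonempty V] :
    (∃ f ≠ 0, adjM G *ᵥ f = specRad G • f) ∧
      ∀ g, g ⬝ᵥ (adjM G *ᵥ g) ≤ specRad G * (g ⬝ᵥ g) := by
  classical
  have hA : (adjM G).IsHermitian := by
    rw [Matrix.IsHermitian, Matrix.conjTranspose_eq_transpose_of_trivial, adjM_transpose]
  obtain ⟨μ, hμ, hrayleigh⟩ := hA.exists_eigenvector_dotProduct_mulVec_le
  suffices specRad G = μ by rw [this]; exact ⟨hμ, hrayleigh⟩
  refine IsGreatest.csSup_eq ⟨hμ, ?_⟩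
  rintro t ⟨f, hf, hft⟩
  have hff : 0 < f ⬝ᵥ f := by simpa using dotProduct_star_self_pos_iff.2 hf
  have := hrayleigh f
  rw [hft, dotProduct_smul, smul_eq_mul] at this
  exact le_of_mul_le_mul_right this hff

theorem le_specRad_of_smul_le_mulVec [Nonempty V] {l : ℝ} {g : V → ℝ} (hg : 0 ≤ g)
    (hg0 : g ≠ 0) (h : l • g ≤ adjM G *ᵥ g) : l ≤ specRad G := by
  have hgg : 0 < g ⬝ᵥ g := by simpa using dotProduct_star_self_pos_iff.2 hg0
  refine le_of_mul_le_mul_right ?_ hgg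
  calc l * (g ⬝ᵥ g) = g ⬝ᵥ (l • g) := by rw [dotProduct_smul, smul_eq_mul]
    _ ≤ g ⬝ᵥ (adjM G *ᵥ g) := dotProduct_le_dotProduct_of_nonneg_left h hg
    _ ≤ specRad G * (g ⬝ᵥ g) := (specRad_spec G).2 g

theorem specRad_le_of_mulVec_le_smul [Nonempty V] {l : ℝ} {g : V → ℝ} (hg : ∀ v, 0 < g v)
    (h : adjM G *ᵥ g ≤ l • g) : specRad G ≤ l := by
  obtain ⟨f, hf, hfρ⟩ := (specRad_spec G).1
  have habs : specRad G • |f| ≤ adjM G *ᵥ |f| := fun v => by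
    calc specRad G * |f v| ≤ |specRad G * f v| := by rw [abs_mul]; gcongr; exact le_abs_self _
      _ = |∑ u, adjM G v u * f u| := by rw [← smul_eq_mul, ← Pi.smul_apply, ← hfρ]; rfl
      _ ≤ ∑ u, adjM G v u * |f u| := by
        refine (Finset.abs_sum_le_sum_abs _ _).trans_eq (Finset.sum_congr rfl fun u _ => ?_)
        rw [abs_mul, abs_of_nonneg (adjM_nonneg G v u)]
  have hfg : 0 < |f| ⬝ᵥ g := by
    obtain ⟨v, hv⟩ := Function.ne_iff.1 hf
    exact Finset.sum_pos' (fun u _ => mul_nonneg (abs_nonneg _) (hg u).le)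
      ⟨v, Finset.mem_univ v, mul_pos (abs_pos.2 hv) (hg v)⟩
  refine le_of_mul_le_mul_right ?_ hfg
  calc specRad G * (|f| ⬝ᵥ g) = (specRad G • |f|) ⬝ᵥ g := by
        rw [smul_dotProduct, smul_eq_mul]
    _ ≤ (adjM G *ᵥ |f|) ⬝ᵥ g :=
        dotProduct_le_dotProduct_of_nonneg_right habs fun v => (hg v).le
    _ = |f| ⬝ᵥ (adjM G *ᵥ g) := by
      rw [← vecMul_transpose, adjM_transpose, ← dotProduct_mulVec]
    _ ≤ |f| ⬝ᵥ (l • g) := dotProduct_le_dotProduct_of_nonneg_left h fun v => abs_nonneg _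
    _ = l * (|f| ⬝ᵥ g) := by rw [dotProduct_smul, smul_eq_mul]

end Spectral

section Roots

variable {l : ℝ}

theorem sq_sqrt_sq_sub_four (hl : 2 < l) : Real.sqrt (l ^ 2 - 4) ^ 2 = l ^ 2 - 4 :=
  Real.sq_sqrt (by nlinarith)

theorem x1_add_x2 (l : ℝ) : x1 l + x2 l = l := by unfold x1 x2; ring

theorem x1_mul_x2 (hl : 2 < l) : x1 l * x2 l = 1 := by
  have := sq_sqrt_sq_sub_four hl
  unfold x1 x2; nlinarith

theorem x1_pos (hl : 2 < l) : 0 < x1 l := by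
  have := sq_sqrt_sq_sub_four hl
  unfold x1; nlinarith [Real.sqrt_nonneg (l ^ 2 - 4)]

theorem one_lt_x2 (hl : 2 < l) : 1 < x2 l := by
  unfold x2; linarith [Real.sqrt_nonneg (l ^ 2 - 4)]

theorem x1_lt_one (hl : 2 < l) : x1 l < 1 := by
  nlinarith [x1_mul_x2 hl, one_lt_x2 hl, x1_pos hl]

theorem x1_eq_inv_x2 (hl : 2 < l) : x1 l = (x2 l)⁻¹ :=
  eq_inv_of_mul_eq_one_left (x1_mul_x2 hl)

theorem x2_strictMonoOn : StrictMonoOn x2 (Set.Ioi 2) := by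
  intro a ha b hb hab
  have : Real.sqrt (a ^ 2 - 4) ≤ Real.sqrt (b ^ 2 - 4) :=
    Real.sqrt_le_sqrt (by nlinarith [Set.mem_Ioi.1 ha])
  unfold x2; linarith

/-- The function whose zero in `(√(2+√5), ∞)` is `ρ″_k`. -/
noncomputable def rhoFun (k : ℕ) (l : ℝ) : ℝ := d2f l - x1 l ^ k

theorem continuous_rhoFun (k : ℕ) : Continuous (rhoFun k) := by
  unfold rhoFun d2f x1 x2; fun_prop

theorem rhoFun_eq (k : ℕ) (hl : 2 < l) :
    rhoFun k l = x2 l ^ 3 - x2 l - (x2 l)⁻¹ - (x2 l)⁻¹ ^ k := by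
  have := x1_add_x2 l
  rw [x1_eq_inv_x2 hl] at this
  rw [rhoFun, d2f, x1_eq_inv_x2 hl]
  linarith

theorem rhoFun_strictMonoOn (k : ℕ) : StrictMonoOn (rhoFun k) (Set.Ioi 2) := by
  intro a ha b hb hab
  rw [rhoFun_eq k ha, rhoFun_eq k hb]
  have hlt := x2_strictMonoOn ha hb hab
  have h1 := one_lt_x2 (Set.mem_Ioi.1 ha)
  have hcube : x2 a ^ 3 - x2 a < x2 b ^ 3 - x2 b := by
    nlinarith [mul_pos (sub_pos.2 hlt) (by nlinarith : 0 < x2 b ^ 2 + x2 b * x2 a + x2 a ^ 2 - 1)]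
  have hinv : (x2 b)⁻¹ < (x2 a)⁻¹ := inv_strictAnti₀ (by linarith) hlt
  have hpow : (x2 b)⁻¹ ^ k ≤ (x2 a)⁻¹ ^ k :=
    pow_le_pow_left₀ (inv_nonneg.2 (by linarith)) hinv.le k
  linarith

theorem two_lt_sqrt_two_add_sqrt_five : 2 < Real.sqrt (2 + Real.sqrt 5) := by
  have : 2 < Real.sqrt 5 := (Real.lt_sqrt zero_le_two).2 (by norm_num)
  rw [Real.lt_sqrt zero_le_two]
  linarith

theorem d2f_sqrt_two_add_sqrt_five : d2f (Real.sqrt (2 + Real.sqrt 5)) = 0 := by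
  have hl := two_lt_sqrt_two_add_sqrt_five
  set l := Real.sqrt (2 + Real.sqrt 5)
  have hl2 : l ^ 2 = 2 + Real.sqrt 5 := Real.sq_sqrt (by positivity)
  have h5 : Real.sqrt 5 ^ 2 = 5 := Real.sq_sqrt (by norm_num)
  have hxy := x1_mul_x2 hl
  have hsum := x1_add_x2 l
  have hx := x1_pos hl
  have hx1 := x1_lt_one hl
  set x := x1 l
  set y := x2 l
  -- `(y ^ 2 - x ^ 2) ^ 2 = (x ^ 2 + y ^ 2) ^ 2 - 4 = (l ^ 2 - 2) ^ 2 - 4 = 1`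
  have hsq : (y ^ 2 - x ^ 2) ^ 2 = 1 := by
    rw [← hsum] at hl2; nlinarith
  have hdiff : y ^ 2 - x ^ 2 = 1 := by
    have : 0 < y ^ 2 - x ^ 2 := by nlinarith
    nlinarith
  have : d2f l = y ^ 3 - (x + y) := by rw [d2f, hsum]
  rw [this]
  linear_combination y * hdiff + x * hxy

theorem rhoFun_three_pos (k : ℕ) : 0 < rhoFun k 3 := by
  have h5 : Real.sqrt 5 ^ 2 = 5 := Real.sq_sqrt (by norm_num)
  have hx2 : 2 ≤ x2 3 := by
    unfold x2; norm_num; nlinarith [Real.sqrt_nonneg 5]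
  have hx1 : x1 3 ^ k ≤ 1 := pow_le_one₀ (x1_pos (by norm_num)).le (x1_lt_one (by norm_num)).le
  have := pow_le_pow_left₀ zero_le_two hx2 3
  unfold rhoFun d2f
  linarith

theorem exists_unique_rhoFun_eq_zero (k : ℕ) :
    ∃ ρ, Real.sqrt (2 + Real.sqrt 5) < ρ ∧ rhoFun k ρ = 0 ∧
      ∀ x, Real.sqrt (2 + Real.sqrt 5) < x → rhoFun k x = 0 → x = ρ := by
  have hl := two_lt_sqrt_two_add_sqrt_five
  have hneg : rhoFun k (Real.sqrt (2 + Real.sqrt 5)) < 0 := by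
    rw [rhoFun, d2f_sqrt_two_add_sqrt_five, zero_sub, neg_lt_zero]
    exact pow_pos (x1_pos hl) k
  have hl3 : Real.sqrt (2 + Real.sqrt 5) ≤ 3 := by
    have : Real.sqrt 5 ≤ 3 := Real.sqrt_le_iff.2 ⟨by norm_num, by norm_num⟩
    exact Real.sqrt_le_iff.2 ⟨by norm_num, by linarith⟩
  obtain ⟨ρ, ⟨hρl, -⟩, hρ⟩ := intermediate_value_Ioo hl3 (continuous_rhoFun k).continuousOn
    ⟨hneg, rhoFun_three_pos k⟩
  refine ⟨ρ, hρl, hρ, fun x hx hx0 => (rhoFun_strictMonoOn k).injOn ?_ ?_ (hx0.trans hρ.symm)⟩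
  · exact hl.trans hx
  · exact hl.trans hρl

section Tree

variable {i k j : ℕ}

/-- In `treeT2 i k j`, the pendant vertex `Sum.inr t` hangs at `Sum.inl (pendantSite i k j t)`. -/
def pendantSite (i k j : ℕ) : Fin 4 → ℕ := ![1, i + 2, i + k + 3, i + k + j + 4]

theorem pendantSite_injective : Function.Injective (pendantSite i k j) := by
  intro s t h
  fin_cases s <;> fin_cases t <;> simp [pendantSite] at h ⊢ <;> omega

theorem treeT2_adj_inl_inl {a b : Fin (i + k + j + 6)} :
    (treeT2 i k j).Adj (.inl a) (.inl b) ↔ (a : ℕ) + 1 = b ∨ (b : ℕ) + 1 = a := by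
  simp only [treeT2, SimpleGraph.fromRel_adj, ne_eq, Sum.inl.injEq, and_iff_right_iff_imp]
  rintro h rfl; omega

theorem treeT2_adj_inr_inl {t : Fin 4} {a : Fin (i + k + j + 6)} :
    (treeT2 i k j).Adj (.inr t) (.inl a) ↔ (a : ℕ) = pendantSite i k j t := by
  fin_cases t <;> simp [treeT2, pendantSite]

theorem treeT2_adj_inl_inr {a : Fin (i + k + j + 6)} {t : Fin 4} :
    (treeT2 i k j).Adj (.inl a) (.inr t) ↔ (a : ℕ) = pendantSite i k j t := by
  rw [SimpleGraph.adj_comm, treeT2_adj_inr_inl]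

theorem treeT2_not_adj_inr_inr {s t : Fin 4} : ¬ (treeT2 i k j).Adj (.inr s) (.inr t) := by
  simp [treeT2]

theorem sum_fin_ite_val_eq (N c : ℕ) (f : ℕ → ℝ) :
    ∑ b : Fin N, (if (b : ℕ) = c then f b else 0) = if c < N then f c else 0 := by
  rw [Fin.sum_univ_eq_sum_range (fun b => if b = c then f b else 0), Finset.sum_ite_eq']
  simp only [Finset.mem_range]

variable (G : ℕ → ℝ) (Q : Fin 4 → ℝ)

theorem treeT2_mulVec_inr (t : Fin 4) :
    (adjM (treeT2 i k j) *ᵥ Sum.elim (fun a => G a) Q) (.inr t) = G (pendantSite i k j t) := by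
  simp only [mulVec, dotProduct, adjM, Fintype.sum_sum_type, Sum.elim_inl, Sum.elim_inr, ite_mul,
    one_mul, zero_mul, treeT2_adj_inr_inl, treeT2_not_adj_inr_inr, if_false,
    Finset.sum_const_zero, add_zero]
  rw [sum_fin_ite_val_eq, if_pos (by fin_cases t <;> simp [pendantSite] <;> omega)]

theorem treeT2_mulVec_inl (a : Fin (i + k + j + 6)) :
    (adjM (treeT2 i k j) *ᵥ Sum.elim (fun a => G a) Q) (.inl a) =
      (if (a : ℕ) + 1 < i + k + j + 6 then G (a + 1) else 0) +
        (if 0 < (a : ℕ) then G (a - 1) else 0) +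
        ∑ t, if (a : ℕ) = pendantSite i k j t then Q t else 0 := by
  simp only [mulVec, dotProduct, adjM, Fintype.sum_sum_type, Sum.elim_inl, Sum.elim_inr, ite_mul,
    one_mul, zero_mul, treeT2_adj_inl_inl, treeT2_adj_inl_inr]
  congr 1
  have hsplit : ∀ b : Fin (i + k + j + 6),
      (if (a : ℕ) + 1 = b ∨ (b : ℕ) + 1 = a then G b else 0) =
        (if (b : ℕ) = a + 1 then G b else 0) +
          (if (b : ℕ) = a - 1 then (if 0 < (a : ℕ) then G b else 0) else 0) := by
    intro b
    split_ifs <;> first | omega | ring1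
  rw [Finset.sum_congr rfl fun b _ => hsplit b, Finset.sum_add_distrib, sum_fin_ite_val_eq,
    sum_fin_ite_val_eq _ _ fun b => if 0 < (a : ℕ) then G b else 0,
    if_pos (show (a : ℕ) - 1 < i + k + j + 6 by omega)]

theorem treeT2_mulVec_inl_of_ne (a : Fin (i + k + j + 6))
    (ha : ∀ t, (a : ℕ) ≠ pendantSite i k j t) :
    (adjM (treeT2 i k j) *ᵥ Sum.elim (fun a => G a) Q) (.inl a) =
      (if (a : ℕ) + 1 < i + k + j + 6 then G (a + 1) else 0) +
        (if 0 < (a : ℕ) then G (a - 1) else 0) := by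
  simp [treeT2_mulVec_inl, ha]

theorem treeT2_mulVec_inl_pendantSite (a : Fin (i + k + j + 6)) (t : Fin 4)
    (ha : (a : ℕ) = pendantSite i k j t) :
    (adjM (treeT2 i k j) *ᵥ Sum.elim (fun a => G a) Q) (.inl a) = G (a + 1) + G (a - 1) + Q t := by
  have h1 : 0 < (a : ℕ) ∧ (a : ℕ) + 1 < i + k + j + 6 := by
    fin_cases t <;> simp [pendantSite] at ha <;> omega
  rw [treeT2_mulVec_inl, if_pos h1.2, if_pos h1.1]
  simp [ha, (pendantSite_injective (i := i) (k := k) (j := j)).eq_iff]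

end Tree

section Profile

variable {x y : ℝ} {i k j : ℕ}

def armProfile (x y t : ℝ) (m : ℕ) : ℝ := if m = 0 then t else t * (y ^ m + x ^ m)

def midProfile (x : ℝ) (k r : ℕ) : ℝ := x ^ r + x ^ (k + 1 - r)

noncomputable def armScale (x y : ℝ) (k m : ℕ) : ℝ := (1 + x ^ (k + 1)) / (y ^ m + x ^ m)

noncomputable def testProfile (x y : ℝ) (i k j m : ℕ) : ℝ :=
  if m ≤ i + 2 then armProfile x y (armScale x y k (i + 2)) m
  else if m ≤ i + k + 3 then midProfile x k (m - (i + 2))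
  else armProfile x y (armScale x y k (j + 2)) (i + k + j + 5 - m)

noncomputable def testVec (x y : ℝ) (i k j : ℕ) : Fin (i + k + j + 6) ⊕ Fin 4 → ℝ :=
  Sum.elim (fun a => testProfile x y i k j a)
    (fun t => testProfile x y i k j (pendantSite i k j t) / (x + y))

theorem armProfile_one (t : ℝ) : armProfile x y t 1 = (x + y) * armProfile x y t 0 := by
  simp [armProfile]; ring

theorem armProfile_cherry (hxy : x * y = 1) (hs : x + y ≠ 0) (t : ℝ) :
    armProfile x y t 2 + armProfile x y t 0 + armProfile x y t 1 / (x + y) =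
      (x + y) * armProfile x y t 1 := by
  simp only [armProfile, OfNat.ofNat_ne_zero, one_ne_zero, if_false, if_true, pow_one]
  rw [add_comm y x, mul_div_cancel_right₀ _ hs]
  linear_combination (-2 * t) * hxy

theorem armProfile_harmonic (hxy : x * y = 1) (t : ℝ) (m : ℕ) :
    armProfile x y t (m + 3) + armProfile x y t (m + 1) = (x + y) * armProfile x y t (m + 2) := by
  simp only [armProfile, Nat.add_eq_zero_iff, OfNat.ofNat_ne_zero, one_ne_zero, and_false, if_false]
  linear_combination (-t * (y ^ (m + 1) + x ^ (m + 1))) * hxy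

theorem midProfile_harmonic (hxy : x * y = 1) {r : ℕ} (hr : r + 2 ≤ k + 1) :
    midProfile x k (r + 2) + midProfile x k r = (x + y) * midProfile x k (r + 1) := by
  obtain ⟨d, rfl⟩ : ∃ d, k = r + 1 + d := ⟨k - (r + 1), by omega⟩
  simp only [midProfile, show r + 1 + d + 1 - (r + 2) = d by omega,
    show r + 1 + d + 1 - r = d + 2 by omega, show r + 1 + d + 1 - (r + 1) = d + 1 by omega]
  linear_combination (-(x ^ r + x ^ d)) * hxy

theorem armProfile_armScale (hxy : x * y = 1) (hx : 0 < x) (m : ℕ) :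
    armProfile x y (armScale x y k (m + 1)) (m + 1) = 1 + x ^ (k + 1) := by
  have hy : 0 < y := pos_of_mul_pos_right (hxy ▸ one_pos) hx.le
  simp only [armProfile, armScale, Nat.add_one_ne_zero, if_false]
  exact div_mul_cancel₀ _ (by positivity)

theorem testProfile_left {m : ℕ} (hm : m ≤ i + 2) :
    testProfile x y i k j m = armProfile x y (armScale x y k (i + 2)) m := by
  simp [testProfile, hm]

theorem testProfile_mid (hxy : x * y = 1) (hx : 0 < x) {r : ℕ} (hr : r ≤ k + 1) :
    testProfile x y i k j (i + 2 + r) = midProfile x k r := by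
  rcases Nat.eq_zero_or_pos r with rfl | hr0
  · rw [testProfile_left le_rfl, armProfile_armScale hxy hx]
    simp [midProfile, add_comm]
  · simp [testProfile, show ¬ i + 2 + r ≤ i + 2 by omega, show i + 2 + r ≤ i + k + 3 by omega]

theorem testProfile_right (hxy : x * y = 1) (hx : 0 < x) {m : ℕ} (hm : m ≤ j + 2) :
    testProfile x y i k j (i + k + j + 5 - m) = armProfile x y (armScale x y k (j + 2)) m := by
  rcases hm.lt_or_eq with hm' | rfl
  · simp [testProfile, show ¬ i + k + j + 5 - m ≤ i + 2 by omega,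
      show ¬ i + k + j + 5 - m ≤ i + k + 3 by omega,
      show i + k + j + 5 - (i + k + j + 5 - m) = m by omega]
  · rw [show i + k + j + 5 - (j + 2) = i + 2 + (k + 1) by omega, testProfile_mid hxy hx le_rfl,
      armProfile_armScale hxy hx]
    simp [midProfile, add_comm]

theorem testProfile_harmonic (hxy : x * y = 1) (hx : 0 < x) {a : ℕ} (ha : 2 ≤ a)
    (ha' : a + 2 ≤ i + k + j + 5) (hB1 : a ≠ i + 2) (hB2 : a ≠ i + k + 3) :
    testProfile x y i k j (a + 1) + testProfile x y i k j (a - 1) =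
      (x + y) * testProfile x y i k j a := by
  rcases Nat.lt_or_ge a (i + 2) with hL | hM
  · obtain ⟨m, rfl⟩ : ∃ m, a = m + 2 := ⟨a - 2, by omega⟩
    rw [testProfile_left (by omega), testProfile_left (by omega), testProfile_left (by omega)]
    exact armProfile_harmonic hxy _ m
  rcases Nat.lt_or_ge a (i + k + 3) with hM' | hR
  · obtain ⟨r, rfl⟩ : ∃ r, a = i + 2 + (r + 1) := ⟨a - (i + 3), by omega⟩
    rw [show i + 2 + (r + 1) + 1 = i + 2 + (r + 2) by omega,
      show i + 2 + (r + 1) - 1 = i + 2 + r by omega, testProfile_mid hxy hx (by omega),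
      testProfile_mid hxy hx (by omega), testProfile_mid hxy hx (by omega)]
    exact midProfile_harmonic hxy (by omega)
  · obtain ⟨m, rfl⟩ : ∃ m, a = i + k + j + 5 - (m + 2) := ⟨i + k + j + 3 - a, by omega⟩
    rw [show i + k + j + 5 - (m + 2) + 1 = i + k + j + 5 - (m + 1) by omega,
      show i + k + j + 5 - (m + 2) - 1 = i + k + j + 5 - (m + 3) by omega,
      testProfile_right hxy hx (by omega), testProfile_right hxy hx (by omega),
      testProfile_right hxy hx (by omega), add_comm]
    exact armProfile_harmonic hxy _ m

/-- The defect `λ g_B - (A g)_B` at a branch vertex `B`, in the limit of long arms. -/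
noncomputable def branchDefect (x y : ℝ) (k : ℕ) : ℝ := (y ^ 3 - (x + y) - x ^ k) / ((x + y) * y)

noncomputable def armError (x y : ℝ) (k m : ℕ) : ℝ :=
  armScale x y k (m + 2) * x ^ (m + 1) * (1 - x ^ 2)

theorem armProfile_branch (hxy : x * y = 1) (hx : 0 < x) (m : ℕ) :
    (x + x ^ k) + armProfile x y (armScale x y k (m + 2)) (m + 1) + (1 + x ^ (k + 1)) / (x + y) =
      (x + y) * (1 + x ^ (k + 1)) - branchDefect x y k + armError x y k m := by
  have hy : 0 < y := pos_of_mul_pos_right (hxy ▸ one_pos) hx.le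
  have hscale := armProfile_armScale (k := k) hxy hx (m + 1)
  set t := armScale x y k (m + 2)
  have harm : armProfile x y t (m + 1) = x * (1 + x ^ (k + 1)) + t * x ^ (m + 1) * (1 - x ^ 2) := by
    simp only [armProfile, Nat.add_one_ne_zero, if_false] at hscale ⊢
    linear_combination (-t * y ^ (m + 1)) * hxy + x * hscale
  have hs : 0 < x + y := by positivity
  rw [harm, armError, branchDefect]
  field_simp
  linear_combination (x - x ^ k * (x * y - 1) - y ^ 2 * x ^ k) * hxy

theorem armError_nonneg (hxy : x * y = 1) (hx : 0 < x) (hx1 : x ≤ 1) (m : ℕ) :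
    0 ≤ armError x y k m := by
  have hy : 0 < y := pos_of_mul_pos_right (hxy ▸ one_pos) hx.le
  have : x ^ 2 ≤ 1 := pow_le_one₀ hx.le hx1
  unfold armError armScale
  have : 0 ≤ 1 - x ^ 2 := by linarith
  positivity

theorem armError_le (hxy : x * y = 1) (hx : 0 < x) (hx1 : x ≤ 1) (m : ℕ) :
    armError x y k m ≤ 2 * x ^ m := by
  have hy : 0 < y := pos_of_mul_pos_right (hxy ▸ one_pos) hx.le
  have hscale := armProfile_armScale (k := k) hxy hx (m + 1)
  simp only [armProfile, Nat.add_one_ne_zero, if_false] at hscale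
  set t := armScale x y k (m + 2)
  have ht : 0 ≤ t := by unfold t armScale; positivity
  have hxk : x ^ (k + 1) ≤ 1 := pow_le_one₀ hx.le hx1
  have hty : t * y ^ (m + 2) ≤ 2 := by nlinarith [pow_pos hx (m + 2)]
  have htx : t ≤ 2 * x ^ (m + 2) := by
    have : (x * y) ^ (m + 2) = 1 := by rw [hxy, one_pow]
    rw [mul_pow] at this
    nlinarith [pow_pos hx (m + 2)]
  have h1 : x ^ (m + 1) * (1 - x ^ 2) ≤ 1 := by
    nlinarith [pow_le_one₀ hx.le hx1 (n := m + 1), pow_nonneg hx.le (m + 1), sq_nonneg x]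
  have h2 : x ^ (m + 2) ≤ x ^ m := pow_le_pow_of_le_one hx.le hx1 (by omega)
  calc armError x y k m = t * (x ^ (m + 1) * (1 - x ^ 2)) := by rw [armError]; ring
    _ ≤ t := mul_le_of_le_one_right ht h1
    _ ≤ 2 * x ^ m := by linarith

theorem testProfile_leaf_left :
    testProfile x y i k j (0 + 1) = (x + y) * testProfile x y i k j 0 := by
  rw [testProfile_left (by omega), testProfile_left (by omega)]
  exact armProfile_one _

theorem testProfile_leaf_right (hxy : x * y = 1) (hx : 0 < x) :
    testProfile x y i k j (i + k + j + 5 - 1) =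
      (x + y) * testProfile x y i k j (i + k + j + 5) := by
  rw [testProfile_right hxy hx (m := 1) (by omega), ← Nat.sub_zero (i + k + j + 5),
    testProfile_right hxy hx (m := 0) (by omega)]
  exact armProfile_one _

theorem testProfile_cherry_left (hxy : x * y = 1) (hx : 0 < x) :
    testProfile x y i k j (1 + 1) + testProfile x y i k j (1 - 1) +
      testProfile x y i k j 1 / (x + y) = (x + y) * testProfile x y i k j 1 := by
  have hy : 0 < y := pos_of_mul_pos_right (hxy ▸ one_pos) hx.le
  rw [testProfile_left (by omega), testProfile_left (by omega), testProfile_left (by omega)]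
  exact armProfile_cherry hxy (by positivity) _

theorem testProfile_cherry_right (hxy : x * y = 1) (hx : 0 < x) :
    testProfile x y i k j (i + k + j + 4 + 1) + testProfile x y i k j (i + k + j + 4 - 1) +
      testProfile x y i k j (i + k + j + 4) / (x + y) =
        (x + y) * testProfile x y i k j (i + k + j + 4) := by
  have hy : 0 < y := pos_of_mul_pos_right (hxy ▸ one_pos) hx.le
  rw [show i + k + j + 4 + 1 = i + k + j + 5 - 0 by omega, testProfile_right hxy hx (by omega),
    show i + k + j + 4 - 1 = i + k + j + 5 - 2 by omega, testProfile_right hxy hx (by omega),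
    show i + k + j + 4 = i + k + j + 5 - 1 by omega, testProfile_right hxy hx (by omega)]
  linarith [armProfile_cherry hxy (by positivity : x + y ≠ 0) (armScale x y k (j + 2))]

theorem testProfile_branch_left (hxy : x * y = 1) (hx : 0 < x) :
    testProfile x y i k j (i + 2 + 1) + testProfile x y i k j (i + 2 - 1) +
      testProfile x y i k j (i + 2) / (x + y) =
        (x + y) * testProfile x y i k j (i + 2) + (armError x y k i - branchDefect x y k) := by
  rw [testProfile_mid hxy hx (r := 1) (by omega), show i + 2 - 1 = i + 1 by omega,
    testProfile_left (by omega), testProfile_left le_rfl, armProfile_armScale hxy hx]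
  have := armProfile_branch (k := k) hxy hx i
  simp only [midProfile, pow_one, Nat.add_sub_cancel]
  linear_combination this

theorem testProfile_branch_right (hxy : x * y = 1) (hx : 0 < x) :
    testProfile x y i k j (i + k + 3 + 1) + testProfile x y i k j (i + k + 3 - 1) +
      testProfile x y i k j (i + k + 3) / (x + y) =
        (x + y) * testProfile x y i k j (i + k + 3) + (armError x y k j - branchDefect x y k) := by
  rw [show i + k + 3 + 1 = i + k + j + 5 - (j + 1) by omega, testProfile_right hxy hx (by omega),
    show i + k + 3 - 1 = i + 2 + k by omega, testProfile_mid hxy hx (by omega),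
    show i + k + 3 = i + 2 + (k + 1) by omega, testProfile_mid hxy hx le_rfl]
  have := armProfile_branch (k := k) hxy hx j
  simp only [midProfile, pow_one, Nat.sub_self, pow_zero, Nat.add_sub_cancel_left]
  linear_combination this

theorem mulVec_testVec_inr (hxy : x * y = 1) (hx : 0 < x) (t : Fin 4) :
    (adjM (treeT2 i k j) *ᵥ testVec x y i k j) (.inr t) = (x + y) * testVec x y i k j (.inr t) := by
  have hy : 0 < y := pos_of_mul_pos_right (hxy ▸ one_pos) hx.le
  rw [testVec, treeT2_mulVec_inr, Sum.elim_inr, mul_div_cancel₀ _ (by positivity)]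

theorem mulVec_testVec_inl (hxy : x * y = 1) (hx : 0 < x) (a : Fin (i + k + j + 6)) :
    (adjM (treeT2 i k j) *ᵥ testVec x y i k j) (.inl a) = (x + y) * testVec x y i k j (.inl a) +
      (if (a : ℕ) = i + 2 then armError x y k i - branchDefect x y k else 0) +
      (if (a : ℕ) = i + k + 3 then armError x y k j - branchDefect x y k else 0) := by
  have hlt := a.isLt
  rw [testVec, Sum.elim_inl]
  by_cases hsite : ∃ t, (a : ℕ) = pendantSite i k j t
  · obtain ⟨t, ht⟩ := hsite
    rw [treeT2_mulVec_inl_pendantSite _ _ a t ht, ← ht]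
    have : (a : ℕ) = 1 ∨ (a : ℕ) = i + 2 ∨ (a : ℕ) = i + k + 3 ∨ (a : ℕ) = i + k + j + 4 := by
      fin_cases t <;> simp [pendantSite] at ht <;> omega
    rcases this with h | h | h | h <;> rw [h]
    · rw [if_neg (by omega), if_neg (by omega), add_zero, add_zero]
      exact testProfile_cherry_left hxy hx
    · rw [if_pos rfl, if_neg (by omega), add_zero]
      exact testProfile_branch_left hxy hx
    · rw [if_neg (by omega), if_pos rfl, add_zero]
      exact testProfile_branch_right hxy hx
    · rw [if_neg (by omega), if_neg (by omega), add_zero, add_zero]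
      exact testProfile_cherry_right hxy hx
  · simp only [not_exists] at hsite
    have h1 : (a : ℕ) ≠ 1 := hsite 0
    have hB1 : (a : ℕ) ≠ i + 2 := hsite 1
    have hB2 : (a : ℕ) ≠ i + k + 3 := hsite 2
    have h3 : (a : ℕ) ≠ i + k + j + 4 := hsite 3
    rw [treeT2_mulVec_inl_of_ne _ _ a hsite, if_neg hB1, if_neg hB2, add_zero, add_zero]
    rcases Nat.eq_zero_or_pos (a : ℕ) with h0 | h0
    · rw [h0, if_pos (by omega), if_neg (by omega), add_zero]
      exact testProfile_leaf_left
    rcases (show (a : ℕ) = i + k + j + 5 ∨ (a : ℕ) + 2 ≤ i + k + j + 5 by omega) with hn | hn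
    · rw [hn, if_neg (by omega), if_pos (by omega), zero_add]
      exact testProfile_leaf_right hxy hx
    · rw [if_pos (by omega), if_pos h0]
      exact testProfile_harmonic hxy hx (by omega) hn hB1 hB2

theorem testVec_pos (hxy : x * y = 1) (hx : 0 < x) (v : Fin (i + k + j + 6) ⊕ Fin 4) :
    0 < testVec x y i k j v := by
  have hy : 0 < y := pos_of_mul_pos_right (hxy ▸ one_pos) hx.le
  have harm : ∀ m n, 0 < armProfile x y (armScale x y k m) n := fun m n => by
    unfold armProfile armScale; split_ifs <;> positivity
  have hprof : ∀ m, 0 < testProfile x y i k j m := fun m => by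
    unfold testProfile midProfile; split_ifs <;> first | exact harm _ _ | positivity
  rcases v with a | t
  · exact hprof a
  · exact div_pos (hprof _) (by positivity)

end Profile

section Limit

variable {k : ℕ} {l : ℝ}

theorem branchDefect_x1_x2 :
    branchDefect (x1 l) (x2 l) k = rhoFun k l / (l * x2 l) := by
  rw [branchDefect, x1_add_x2, rhoFun, d2f]

theorem le_specRad_treeT2 (hl : 2 < l) (hF : rhoFun k l ≤ 0) (i j : ℕ) :
    l ≤ specRad (treeT2 i k j) := by
  have hxy := x1_mul_x2 hl
  have hx := x1_pos hl
  have hdefect : branchDefect (x1 l) (x2 l) k ≤ 0 := by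
    rw [branchDefect_x1_x2]
    exact div_nonpos_of_nonpos_of_nonneg hF (by nlinarith [one_lt_x2 hl])
  have herr := fun m => armError_nonneg (k := k) hxy hx (x1_lt_one hl).le m
  refine le_specRad_of_smul_le_mulVec _ (fun v => (testVec_pos hxy hx v).le)
    (fun h => (testVec_pos hxy hx (.inr 0)).ne' (congrFun h _)) fun v => ?_
  rw [Pi.smul_apply, smul_eq_mul]
  rcases v with a | t
  · rw [mulVec_testVec_inl hxy hx, x1_add_x2]
    have := herr i
    have := herr j
    split_ifs <;> linarith
  · rw [mulVec_testVec_inr hxy hx, x1_add_x2]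

theorem eventually_specRad_treeT2_le (hl : 2 < l) (hF : 0 < rhoFun k l) :
    ∃ M, ∀ i j, M ≤ i → M ≤ j → specRad (treeT2 i k j) ≤ l := by
  have hxy := x1_mul_x2 hl
  have hx := x1_pos hl
  have hx1 := x1_lt_one hl
  have hdefect : 0 < branchDefect (x1 l) (x2 l) k := by
    rw [branchDefect_x1_x2]
    exact div_pos hF (by nlinarith [one_lt_x2 hl])
  obtain ⟨M, hM⟩ := exists_pow_lt_of_lt_one (half_pos hdefect) hx1
  have herr : ∀ m, M ≤ m → armError (x1 l) (x2 l) k m ≤ branchDefect (x1 l) (x2 l) k := by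
    intro m hm
    have := pow_le_pow_of_le_one hx.le hx1.le hm
    linarith [armError_le (k := k) hxy hx hx1.le m]
  refine ⟨M, fun i j hi hj => specRad_le_of_mulVec_le_smul _ (testVec_pos hxy hx) fun v => ?_⟩
  rw [Pi.smul_apply, smul_eq_mul]
  rcases v with a | t
  · rw [mulVec_testVec_inl hxy hx, x1_add_x2]
    have := herr i hi
    have := herr j hj
    split_ifs <;> linarith
  · rw [mulVec_testVec_inr hxy hx, x1_add_x2]

end Limit

theorem specRad_T2_limit_general (k : ℕ) :
    ∃ ρ : ℝ,
      (Real.sqrt (2 + Real.sqrt 5) < ρ ∧ d2f ρ = x1 ρ ^ k) ∧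
      (∀ x : ℝ, Real.sqrt (2 + Real.sqrt 5) < x → d2f x = x1 x ^ k → x = ρ) ∧
      (∀ ε : ℝ, 0 < ε → ∃ M : ℕ, ∀ i j : ℕ, M ≤ i → M ≤ j →
        |specRad (treeT2 i k j) - ρ| < ε) := by
  obtain ⟨ρ, hρ, hρ0, huniq⟩ := exists_unique_rhoFun_eq_zero k
  have h2 : 2 < ρ := two_lt_sqrt_two_add_sqrt_five.trans hρ
  refine ⟨ρ, ⟨hρ, sub_eq_zero.1 hρ0⟩, fun x hx hx0 => huniq x hx (sub_eq_zero.2 hx0),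
    fun ε hε => ?_⟩
  have hF : 0 < rhoFun k (ρ + ε / 2) :=
    hρ0 ▸ rhoFun_strictMonoOn k h2 (show 2 < ρ + ε / 2 by linarith) (by linarith)
  obtain ⟨M, hM⟩ := eventually_specRad_treeT2_le (by linarith) hF
  refine ⟨M, fun i j hi hj => abs_sub_lt_iff.2 ⟨?_, ?_⟩⟩
  · linarith [hM i j hi hj]
  · linarith [le_specRad_treeT2 h2 hρ0.le i j]

/-- Lemma 2.10: the equation `d_2 = x_1^k` has a unique root `ρ″_k` in `(√(2+√5), ∞)`,
and `ρ(T″_{(i,k,j)}) → ρ″_k` as `min(i,j) → ∞`. -/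
theorem specRad_T2_limit (k : ℕ) (hk : 1 ≤ k) :
    ∃ ρ : ℝ,
      (Real.sqrt (2 + Real.sqrt 5) < ρ ∧ d2f ρ = x1 ρ ^ k) ∧
      (∀ x : ℝ, Real.sqrt (2 + Real.sqrt 5) < x → d2f x = x1 x ^ k → x = ρ) ∧
      (∀ ε : ℝ, 0 < ε → ∃ M : ℕ, ∀ i j : ℕ, M ≤ i → M ≤ j →
        |specRad (treeT2 i k j) - ρ| < ε) :=
  specRad_T2_limit_general k
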